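/- Let P1 be a linear prevision on G(X1) and P2 a linear prevision on G(X2), viewed as coherent conditional lower previsions on { (f, X_i) : f ∈ G(X_i) }, and let 𝔅_1 ⊆ P_∅(X1), 𝔅_2 ⊆ P_∅(X2). Then for every gamble f on X1×X2, the function P2(f) : X1 → ℝ defined by P2(f)(x1) := P2(f(x1,·)) is a gamble on X1, and (P1⊗P2)(f) ≤ P1(P2(f)) ≤ −(P1⊗P2)(−f), where (P1⊗P2)(·) abbreviates (P1⊗P2)(·|X1×X2) and P1⊗P2 is the independent natural extension of P1 and P2 to C(X1×X2). -/

import Mathlib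

open scoped BigOperators

namespace IPaper

variable {X : Type*}

/-- A gamble on `X`: a bounded real-valued function. -/
def IsGamble (f : X → ℝ) : Prop := ∃ M : ℝ, ∀ x, |f x| ≤ M

/-- The indicator gamble of an event. -/
noncomputable def ind (B : Set X) : X → ℝ := Set.indicator B 1

/-- The set `G_{>0}(X)` of nonnegative nonzero gambles. -/
def Gpos (X : Type*) : Set (X → ℝ) := {f | IsGamble f ∧ 0 ≤ f ∧ f ≠ 0}

/-- A coherent set of desirable gambles. -/
structure CoherentSDG (D : Set (X → ℝ)) : Prop where
  subset_gambles : ∀ f ∈ D, IsGamble f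
  d1 : ∀ f : X → ℝ, IsGamble f → 0 ≤ f → f ≠ 0 → f ∈ D
  d2 : ∀ f ∈ D, ∀ l : ℝ, 0 < l → l • f ∈ D
  d3 : ∀ f ∈ D, ∀ g ∈ D, f + g ∈ D
  d4 : ∀ f : X → ℝ, f ≤ 0 → f ∉ D

/-- `posi A`: positive linear hull of `A`. -/
def posi (A : Set (X → ℝ)) : Set (X → ℝ) :=
  {g | ∃ (n : ℕ) (l : Fin (n + 1) → ℝ) (h : Fin (n + 1) → X → ℝ),
    (∀ i, 0 < l i) ∧ (∀ i, h i ∈ A) ∧ g = ∑ i, l i • h i}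

/-- `E(A) := posi (A ∪ G_{>0}(X))`. -/
def natExtSet (A : Set (X → ℝ)) : Set (X → ℝ) := posi (A ∪ Gpos X)

/-- `C(X)`: all pairs of a gamble and a nonempty event. -/
def domC (X : Type*) : Set ((X → ℝ) × Set X) := {p | IsGamble p.1 ∧ p.2.Nonempty}

/-- The conditional lower prevision `lp_D` derived from a set of gambles `D`. -/
noncomputable def lpOf (D : Set (X → ℝ)) (f : X → ℝ) (B : Set X) : EReal :=
  sSup (Real.toEReal '' {m : ℝ | (fun x => (f x - m) * ind B x) ∈ D})

/-- Coherence (Williams) of a conditional lower prevision on a domain `C`. -/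
def Coherent (C : Set ((X → ℝ) × Set X)) (lp : (X → ℝ) → Set X → EReal) : Prop :=
  ∃ D : Set (X → ℝ), CoherentSDG D ∧ ∀ p ∈ C, lp p.1 p.2 = lpOf D p.1 p.2

/-- The set `A_lp`. -/
def Alp (C : Set ((X → ℝ) × Set X)) (lp : (X → ℝ) → Set X → EReal) : Set (X → ℝ) :=
  {g | ∃ p ∈ C, ∃ m : ℝ, (m : EReal) < lp p.1 p.2 ∧ g = fun x => (p.1 x - m) * ind p.2 x}

/-- `E(lp) := E(A_lp)`. -/
def ElpSet (C : Set ((X → ℝ) × Set X)) (lp : (X → ℝ) → Set X → EReal) : Set (X → ℝ) :=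
  natExtSet (Alp C lp)

/-- The natural extension of `lp` to all of `C(X)`. -/
noncomputable def natExtLP (C : Set ((X → ℝ) × Set X)) (lp : (X → ℝ) → Set X → EReal)
    (f : X → ℝ) (B : Set X) : EReal :=
  lpOf (ElpSet C lp) f B

/-- Simple `B`-measurable gamble. -/
def SimpleMeas (Bfam : Set (Set X)) (g : X → ℝ) : Prop :=
  ∃ (c0 : ℝ) (n : ℕ) (c : Fin n → ℝ) (Bs : Fin n → Set X),
    0 ≤ c0 ∧ (∀ i, 0 ≤ c i) ∧ (∀ i, Bs i ∈ Bfam) ∧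
    g = fun x => c0 + ∑ i, c i * ind (Bs i) x

/-- `B`-measurable gamble: uniform limit of nonnegative simple `B`-measurable gambles. -/
def BMeas (Bfam : Set (Set X)) (g : X → ℝ) : Prop :=
  ∃ gs : ℕ → X → ℝ, (∀ n, 0 ≤ gs n ∧ SimpleMeas Bfam (gs n)) ∧
    TendstoUniformly gs g Filter.atTop

/-- A conditional linear prevision on `C(X)`: a coherent self-conjugate conditional
lower prevision on the full domain. -/
def CondLinPrev (P : (X → ℝ) → Set X → EReal) : Prop :=
  Coherent (domC X) P ∧ ∀ p ∈ domC X, P p.1 p.2 = -P (-p.1) p.2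

section Product

variable {X1 X2 : Type*}

/-- `A_{1→2}`. -/
def A12 (D2 : Set (X2 → ℝ)) (F1 : Set (Set X1)) : Set (X1 × X2 → ℝ) :=
  {g | ∃ f2 ∈ D2, ∃ B1 ∈ F1 ∪ {Set.univ}, g = fun p => f2 p.2 * ind B1 p.1}

/-- `A_{2→1}`. -/
def A21 (D1 : Set (X1 → ℝ)) (F2 : Set (Set X2)) : Set (X1 × X2 → ℝ) :=
  {g | ∃ f1 ∈ D1, ∃ B2 ∈ F2 ∪ {Set.univ}, g = fun p => f1 p.1 * ind B2 p.2}

/-- `D1 ⊗ D2`, relative to the families of conditioning events `F1`, `F2`. -/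
def indNatExt (D1 : Set (X1 → ℝ)) (D2 : Set (X2 → ℝ))
    (F1 : Set (Set X1)) (F2 : Set (Set X2)) : Set (X1 × X2 → ℝ) :=
  natExtSet (A12 D2 F1 ∪ A21 D1 F2)

/-- `marg_1(D)`. -/
def marg1 (D : Set (X1 × X2 → ℝ)) : Set (X1 → ℝ) :=
  {f | IsGamble f ∧ (fun p : X1 × X2 => f p.1) ∈ D}

/-- `marg_2(D)`. -/
def marg2 (D : Set (X1 × X2 → ℝ)) : Set (X2 → ℝ) :=
  {f | IsGamble f ∧ (fun p : X1 × X2 => f p.2) ∈ D}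

/-- `marg_1(D|B2)`. -/
def marg1c (D : Set (X1 × X2 → ℝ)) (B2 : Set X2) : Set (X1 → ℝ) :=
  {f | IsGamble f ∧ (fun p : X1 × X2 => f p.1 * ind B2 p.2) ∈ D}

/-- `marg_2(D|B1)`. -/
def marg2c (D : Set (X1 × X2 → ℝ)) (B1 : Set X1) : Set (X2 → ℝ) :=
  {f | IsGamble f ∧ (fun p : X1 × X2 => f p.2 * ind B1 p.1) ∈ D}

/-- Epistemic independence of a set of desirable gambles on `X1 × X2`. -/
def EpIndSDG (F1 : Set (Set X1)) (F2 : Set (Set X2)) (D : Set (X1 × X2 → ℝ)) : Prop :=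
  (∀ B2 ∈ F2, marg1c D B2 = marg1 D) ∧ (∀ B1 ∈ F1, marg2c D B1 = marg2 D)

/-- Independent product (of sets of desirable gambles). -/
def IndProductSDG (F1 : Set (Set X1)) (F2 : Set (Set X2))
    (D1 : Set (X1 → ℝ)) (D2 : Set (X2 → ℝ)) (D : Set (X1 × X2 → ℝ)) : Prop :=
  CoherentSDG D ∧ EpIndSDG F1 F2 D ∧ marg1 D = D1 ∧ marg2 D = D2

/-- The independent natural extension `lp1 ⊗ lp2` on `C(X1 × X2)`. -/
noncomputable def lpProd (C1 : Set ((X1 → ℝ) × Set X1)) (lp1 : (X1 → ℝ) → Set X1 → EReal)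
    (C2 : Set ((X2 → ℝ) × Set X2)) (lp2 : (X2 → ℝ) → Set X2 → EReal)
    (F1 : Set (Set X1)) (F2 : Set (Set X2)) :
    (X1 × X2 → ℝ) → Set (X1 × X2) → EReal :=
  lpOf (indNatExt (ElpSet C1 lp1) (ElpSet C2 lp2) F1 F2)

/-- An independent domain `C ⊆ C(X1 × X2)`. -/
def IndepDomain (F1 : Set (Set X1)) (F2 : Set (Set X2))
    (C : Set ((X1 × X2 → ℝ) × Set (X1 × X2))) : Prop :=
  (∀ (f1 : X1 → ℝ) (B1 : Set X1), IsGamble f1 → B1.Nonempty → ∀ B2 ∈ F2,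
    (((fun p : X1 × X2 => f1 p.1), B1 ×ˢ (Set.univ : Set X2)) ∈ C ↔
      ((fun p : X1 × X2 => f1 p.1), B1 ×ˢ B2) ∈ C)) ∧
  (∀ (f2 : X2 → ℝ) (B2 : Set X2), IsGamble f2 → B2.Nonempty → ∀ B1 ∈ F1,
    (((fun p : X1 × X2 => f2 p.2), (Set.univ : Set X1) ×ˢ B2) ∈ C ↔
      ((fun p : X1 × X2 => f2 p.2), B1 ×ˢ B2) ∈ C))

/-- Epistemic independence of a conditional lower prevision on a domain `C`. -/
def EpIndLP (F1 : Set (Set X1)) (F2 : Set (Set X2))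
    (C : Set ((X1 × X2 → ℝ) × Set (X1 × X2)))
    (lp : (X1 × X2 → ℝ) → Set (X1 × X2) → EReal) : Prop :=
  (∀ (f1 : X1 → ℝ) (B1 : Set X1), IsGamble f1 → B1.Nonempty →
    ((fun p : X1 × X2 => f1 p.1), B1 ×ˢ (Set.univ : Set X2)) ∈ C → ∀ B2 ∈ F2,
    lp (fun p : X1 × X2 => f1 p.1) (B1 ×ˢ (Set.univ : Set X2)) =
      lp (fun p : X1 × X2 => f1 p.1) (B1 ×ˢ B2)) ∧
  (∀ (f2 : X2 → ℝ) (B2 : Set X2), IsGamble f2 → B2.Nonempty →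
    ((fun p : X1 × X2 => f2 p.2), (Set.univ : Set X1) ×ˢ B2) ∈ C → ∀ B1 ∈ F1,
    lp (fun p : X1 × X2 => f2 p.2) ((Set.univ : Set X1) ×ˢ B2) =
      lp (fun p : X1 × X2 => f2 p.2) (B1 ×ˢ B2))

/-- Independent product of two conditional lower previsions, on the joint domain `C`. -/
def IndProductLP (F1 : Set (Set X1)) (F2 : Set (Set X2))
    (C1 : Set ((X1 → ℝ) × Set X1)) (lp1 : (X1 → ℝ) → Set X1 → EReal)
    (C2 : Set ((X2 → ℝ) × Set X2)) (lp2 : (X2 → ℝ) → Set X2 → EReal)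
    (C : Set ((X1 × X2 → ℝ) × Set (X1 × X2)))
    (lp : (X1 × X2 → ℝ) → Set (X1 × X2) → EReal) : Prop :=
  Coherent C lp ∧ EpIndLP F1 F2 C lp ∧
  (∀ p ∈ C1, lp (fun q : X1 × X2 => p.1 q.1) (p.2 ×ˢ (Set.univ : Set X2)) = lp1 p.1 p.2) ∧
  (∀ p ∈ C2, lp (fun q : X1 × X2 => p.1 q.2) ((Set.univ : Set X1) ×ˢ p.2) = lp2 p.1 p.2)

end Product

/-!
Let `L₁`, `L₂` be the lower previsions of coherent sets of desirable gambles representing `P1`,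
`P2`; self-conjugacy makes them linear. The iterated functional `h ↦ L₁ (x₁ ↦ L₂ (h (x₁, ·)))`
is superadditive, positively homogeneous and nonnegative on nonnegative gambles, so the gambles
where it is nonnegative form a convex cone containing `G_{>0}`. This cone contains `A_{1→2}`,
and also `A_{2→1}`: for `f₁ · 1_{B₂}` linearity of `L₂` pulls out `f₁ (x₁)`, leaving
`L₂ (1_{B₂}) · L₁ f₁ ≥ 0`. Hence it contains `E(P1) ⊗ E(P2)`, so `f - μ ∈ E(P1) ⊗ E(P2)` forces
`μ ≤ L₁ (L₂ f)`. This is the lower bound; applied to `-f` it gives the upper one.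
-/

open scoped Pointwise

section Gambles

variable {Y Z : Type*}

lemma IsGamble.add {f g : Y → ℝ} (hf : IsGamble f) (hg : IsGamble g) : IsGamble (f + g) := by
  obtain ⟨M, hM⟩ := hf
  obtain ⟨N, hN⟩ := hg
  exact ⟨M + N, fun x => (abs_add_le _ _).trans (add_le_add (hM x) (hN x))⟩

lemma IsGamble.smul {g : Y → ℝ} (hg : IsGamble g) (c : ℝ) : IsGamble (c • g) := by
  obtain ⟨M, hM⟩ := hg
  refine ⟨|c| * M, fun x => ?_⟩
  rw [Pi.smul_apply, smul_eq_mul, abs_mul]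
  exact mul_le_mul_of_nonneg_left (hM x) (abs_nonneg c)

lemma IsGamble.neg {g : Y → ℝ} (hg : IsGamble g) : IsGamble (-g) := by
  simpa using hg.smul (-1)

lemma IsGamble.sub {f g : Y → ℝ} (hf : IsGamble f) (hg : IsGamble g) : IsGamble (f - g) := by
  simpa [sub_eq_add_neg] using hf.add hg.neg

lemma isGamble_const (c : ℝ) : IsGamble (fun _ : Y => c) := ⟨|c|, fun _ => le_rfl⟩

lemma IsGamble.sub_const {g : Y → ℝ} (hg : IsGamble g) (c : ℝ) : IsGamble (fun x => g x - c) :=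
  hg.sub (isGamble_const c)

lemma IsGamble.mul {f g : Y → ℝ} (hf : IsGamble f) (hg : IsGamble g) : IsGamble (f * g) := by
  obtain ⟨M, hM⟩ := hf
  obtain ⟨N, hN⟩ := hg
  refine ⟨M * N, fun x => ?_⟩
  rw [Pi.mul_apply, abs_mul]
  exact mul_le_mul (hM x) (hN x) (abs_nonneg _) ((abs_nonneg _).trans (hM x))

lemma IsGamble.comp {g : Y → ℝ} (hg : IsGamble g) (φ : Z → Y) : IsGamble (g ∘ φ) := by
  obtain ⟨M, hM⟩ := hg
  exact ⟨M, fun z => hM (φ z)⟩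

lemma ind_nonneg (B : Set Y) (x : Y) : 0 ≤ ind B x := by
  unfold ind
  by_cases hx : x ∈ B <;> simp [hx]

lemma isGamble_ind (B : Set Y) : IsGamble (ind B) :=
  ⟨1, fun x => by unfold ind; by_cases hx : x ∈ B <;> simp [hx]⟩

end Gambles

section LowerPrev

variable {Y : Type*} {D : Set (Y → ℝ)}

def buyPrices (D : Set (Y → ℝ)) (g : Y → ℝ) : Set ℝ := {m | (fun x => g x - m) ∈ D}

noncomputable def lowerPrev (D : Set (Y → ℝ)) (g : Y → ℝ) : ℝ := sSup (buyPrices D g)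

lemma CoherentSDG.le_of_mem_buyPrices (hD : CoherentSDG D) {g : Y → ℝ} {c m : ℝ}
    (hc : ∀ x, g x ≤ c) (hm : m ∈ buyPrices D g) : m ≤ c := by
  by_contra! hlt
  exact hD.d4 _ (fun x => by simp only [Pi.zero_apply]; linarith [hc x]) hm

lemma bddAbove_buyPrices (hD : CoherentSDG D) {g : Y → ℝ} (hg : IsGamble g) :
    BddAbove (buyPrices D g) := by
  obtain ⟨M, hM⟩ := hg
  exact ⟨M, fun _ hm => hD.le_of_mem_buyPrices (fun x => le_of_abs_le (hM x)) hm⟩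

lemma CoherentSDG.smul_mem_iff (hD : CoherentSDG D) {c : ℝ} (hc : 0 < c) {f : Y → ℝ} :
    c • f ∈ D ↔ f ∈ D := by
  refine ⟨fun h => ?_, fun h => hD.d2 f h c hc⟩
  simpa [smul_smul, inv_mul_cancel₀ hc.ne'] using hD.d2 _ h c⁻¹ (inv_pos.2 hc)

lemma buyPrices_smul (hD : CoherentSDG D) {c : ℝ} (hc : 0 < c) (g : Y → ℝ) :
    buyPrices D (c • g) = c • buyPrices D g := by
  ext m
  have hfun : (fun x => (c • g) x - m) = c • fun x => g x - c⁻¹ • m := by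
    ext x
    simp [mul_sub, hc.ne']
  change _ ∈ D ↔ _
  rw [Set.mem_smul_set_iff_inv_smul_mem₀ hc.ne', hfun, hD.smul_mem_iff hc]
  rfl

variable [Nonempty Y]

lemma CoherentSDG.mem_of_pos (hD : CoherentSDG D) {g : Y → ℝ} (hg : IsGamble g)
    (hpos : ∀ x, 0 < g x) : g ∈ D :=
  hD.d1 g hg (fun x => (hpos x).le) fun h0 => (hpos (Classical.arbitrary Y)).ne' (congrFun h0 _)

lemma mem_buyPrices_of_lt (hD : CoherentSDG D) {g : Y → ℝ} (hg : IsGamble g) {c m : ℝ}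
    (hc : ∀ x, c ≤ g x) (hm : m < c) : m ∈ buyPrices D g :=
  hD.mem_of_pos (hg.sub_const m) fun x => by linarith [hc x]

lemma buyPrices_nonempty (hD : CoherentSDG D) {g : Y → ℝ} (hg : IsGamble g) :
    (buyPrices D g).Nonempty := by
  obtain ⟨M, hM⟩ := hg
  exact ⟨-M - 1, mem_buyPrices_of_lt hD ⟨M, hM⟩ (fun x => neg_le_of_abs_le (hM x)) (by linarith)⟩

lemma lowerPrev_le (hD : CoherentSDG D) {g : Y → ℝ} (hg : IsGamble g) {c : ℝ}
    (hc : ∀ x, g x ≤ c) : lowerPrev D g ≤ c :=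
  csSup_le (buyPrices_nonempty hD hg) fun _ hm => hD.le_of_mem_buyPrices hc hm

lemma le_lowerPrev (hD : CoherentSDG D) {g : Y → ℝ} (hg : IsGamble g) {c : ℝ}
    (hc : ∀ x, c ≤ g x) : c ≤ lowerPrev D g :=
  le_of_forall_sub_le fun _ hε =>
    le_csSup (bddAbove_buyPrices hD hg) (mem_buyPrices_of_lt hD hg hc (by linarith))

lemma lowerPrev_const (hD : CoherentSDG D) (c : ℝ) : lowerPrev D (fun _ => c) = c :=
  le_antisymm (lowerPrev_le hD (isGamble_const c) fun _ => le_rfl)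
    (le_lowerPrev hD (isGamble_const c) fun _ => le_rfl)

lemma abs_lowerPrev_le (hD : CoherentSDG D) {g : Y → ℝ} {M : ℝ} (hM : ∀ x, |g x| ≤ M) :
    |lowerPrev D g| ≤ M :=
  abs_le.2 ⟨le_lowerPrev hD ⟨M, hM⟩ fun x => neg_le_of_abs_le (hM x),
    lowerPrev_le hD ⟨M, hM⟩ fun x => le_of_abs_le (hM x)⟩

lemma lowerPrev_add_le (hD : CoherentSDG D) {f g : Y → ℝ} (hf : IsGamble f) (hg : IsGamble g) :
    lowerPrev D f + lowerPrev D g ≤ lowerPrev D (f + g) := by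
  rw [lowerPrev, lowerPrev, ← csSup_add (buyPrices_nonempty hD hf) (bddAbove_buyPrices hD hf)
    (buyPrices_nonempty hD hg) (bddAbove_buyPrices hD hg)]
  refine csSup_le_csSup (bddAbove_buyPrices hD (hf.add hg))
    ((buyPrices_nonempty hD hf).add (buyPrices_nonempty hD hg)) ?_
  rintro _ ⟨m, hm, n, hn, rfl⟩
  have hsum : (fun x => (f + g) x - (m + n)) = (fun x => f x - m) + fun x => g x - n := by
    ext x
    simp only [Pi.add_apply]
    ring
  change _ ∈ D
  rw [hsum]
  exact hD.d3 _ hm _ hn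

lemma lowerPrev_mono (hD : CoherentSDG D) {f g : Y → ℝ} (hf : IsGamble f) (hg : IsGamble g)
    (hfg : f ≤ g) : lowerPrev D f ≤ lowerPrev D g :=
  calc lowerPrev D f ≤ lowerPrev D f + lowerPrev D (g - f) :=
        le_add_of_nonneg_right (le_lowerPrev hD (hg.sub hf) fun x => sub_nonneg.2 (hfg x))
    _ ≤ lowerPrev D (f + (g - f)) := lowerPrev_add_le hD hf (hg.sub hf)
    _ = lowerPrev D g := by rw [add_sub_cancel]

lemma lowerPrev_sub_const (hD : CoherentSDG D) {g : Y → ℝ} (hg : IsGamble g) (c : ℝ) :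
    lowerPrev D (fun x => g x - c) = lowerPrev D g - c := by
  have hle := lowerPrev_add_le hD (hg.sub_const c) (isGamble_const c)
  have hge := lowerPrev_add_le hD hg (isGamble_const (-c))
  have hle_eq : (fun x => g x - c) + (fun _ => c) = g := by
    ext x
    simp
  have hge_eq : g + (fun _ => -c) = fun x => g x - c := by
    ext x
    simp [sub_eq_add_neg]
  rw [lowerPrev_const hD, hle_eq] at hle
  rw [lowerPrev_const hD, hge_eq] at hge
  linarith

lemma lowerPrev_smul (hD : CoherentSDG D) {c : ℝ} (hc : 0 ≤ c) (g : Y → ℝ) :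
    lowerPrev D (c • g) = c * lowerPrev D g := by
  rcases hc.eq_or_lt with rfl | hc
  · rw [zero_smul, zero_mul]
    exact lowerPrev_const hD 0
  · rw [lowerPrev, buyPrices_smul hD hc, Real.sSup_smul_of_nonneg hc.le, smul_eq_mul, lowerPrev]

lemma lowerPrev_smul_of_selfConj (hD : CoherentSDG D)
    (hneg : ∀ g : Y → ℝ, IsGamble g → lowerPrev D (-g) = -lowerPrev D g)
    {g : Y → ℝ} (hg : IsGamble g) (c : ℝ) : lowerPrev D (c • g) = c * lowerPrev D g := by
  rcases le_or_gt 0 c with hc | hc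
  · exact lowerPrev_smul hD hc g
  · rw [← neg_neg c, neg_smul, hneg _ (hg.smul _), lowerPrev_smul hD (neg_nonneg.2 hc.le)]
    ring

lemma lpOf_univ (hD : CoherentSDG D) {g : Y → ℝ} (hg : IsGamble g) :
    lpOf D g Set.univ = lowerPrev D g := by
  have hprices : {m : ℝ | (fun x => (g x - m) * ind Set.univ x) ∈ D} = buyPrices D g := by
    simp [buyPrices, ind]
  rw [lpOf, hprices, lowerPrev]
  exact (Monotone.map_csSup_of_continuousAt continuous_coe_real_ereal.continuousAt
    (fun _ _ => EReal.coe_le_coe) (buyPrices_nonempty hD hg) (bddAbove_buyPrices hD hg)).symm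

lemma exists_lowerPrev_of_selfConj {P : (Y → ℝ) → Set Y → EReal}
    (hP : Coherent {p : (Y → ℝ) × Set Y | IsGamble p.1 ∧ p.2 = Set.univ} P)
    (hPc : ∀ g : Y → ℝ, IsGamble g → P g Set.univ = -P (-g) Set.univ) :
    ∃ D : Set (Y → ℝ), CoherentSDG D ∧ (∀ g, IsGamble g → P g Set.univ = lowerPrev D g) ∧
      ∀ g, IsGamble g → lowerPrev D (-g) = -lowerPrev D g := by
  obtain ⟨D, hD, hPD⟩ := hP
  have hPL : ∀ g, IsGamble g → P g Set.univ = lowerPrev D g :=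
    fun g hg => (hPD (g, Set.univ) ⟨hg, rfl⟩).trans (lpOf_univ hD hg)
  refine ⟨D, hD, hPL, fun g hg => ?_⟩
  have hconj := hPc g hg
  rw [hPL g hg, hPL _ hg.neg, ← EReal.coe_neg, EReal.coe_eq_coe_iff] at hconj
  linarith

end LowerPrev

section Cone

variable {Y : Type*}

def nonnegCone (L : (Y → ℝ) → ℝ) : Set (Y → ℝ) := {g | IsGamble g ∧ 0 ≤ L g}

lemma posi_subset {A K : Set (Y → ℝ)} (hAK : A ⊆ K) (hadd : ∀ f ∈ K, ∀ g ∈ K, f + g ∈ K)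
    (hsmul : ∀ f ∈ K, ∀ c : ℝ, 0 < c → c • f ∈ K) : posi A ⊆ K := by
  rintro _ ⟨n, l, h, hl, hA, rfl⟩
  induction n with
  | zero =>
    rw [Fin.sum_univ_one]
    exact hsmul _ (hAK (hA 0)) _ (hl 0)
  | succ n ih =>
    rw [Fin.sum_univ_succ]
    exact hadd _ (hsmul _ (hAK (hA 0)) _ (hl 0)) _
      (ih (fun i => l i.succ) (fun i => h i.succ) (fun i => hl i.succ) fun i => hA i.succ)

lemma natExtSet_subset_nonnegCone {A : Set (Y → ℝ)} {L : (Y → ℝ) → ℝ}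
    (hA : A ⊆ nonnegCone L) (hpos : ∀ g, IsGamble g → 0 ≤ g → 0 ≤ L g)
    (hadd : ∀ f g, IsGamble f → IsGamble g → L f + L g ≤ L (f + g))
    (hsmul : ∀ c : ℝ, 0 < c → ∀ g, IsGamble g → L (c • g) = c * L g) :
    natExtSet A ⊆ nonnegCone L :=
  posi_subset (Set.union_subset hA fun g hg => ⟨hg.1, hpos g hg.1 hg.2.1⟩)
    (fun f hf g hg => ⟨hf.1.add hg.1, (add_nonneg hf.2 hg.2).trans (hadd f g hf.1 hg.1)⟩)
    (fun f hf c hc => ⟨hf.1.smul c, by rw [hsmul c hc f hf.1]; exact mul_nonneg hc.le hf.2⟩)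

lemma lpOf_univ_le_of_subset_nonnegCone {E : Set (Y → ℝ)} {L : (Y → ℝ) → ℝ}
    (hE : E ⊆ nonnegCone L) {f : Y → ℝ} (hL : ∀ m : ℝ, L (fun x => f x - m) = L f - m) :
    lpOf E f Set.univ ≤ L f := by
  refine sSup_le ?_
  rintro _ ⟨m, hm, rfl⟩
  have hm' : (fun x => f x - m) ∈ E := by simpa [ind] using hm
  have hnonneg := (hE hm').2
  rw [hL] at hnonneg
  exact EReal.coe_le_coe_iff.2 (by linarith)

variable [Nonempty Y] {D : Set (Y → ℝ)}

lemma elpSet_subset_nonnegCone (hD : CoherentSDG D) {P : (Y → ℝ) → Set Y → EReal}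
    (hPD : ∀ g, IsGamble g → P g Set.univ = lowerPrev D g) :
    ElpSet {p : (Y → ℝ) × Set Y | IsGamble p.1 ∧ p.2 = Set.univ} P ⊆ nonnegCone (lowerPrev D) := by
  refine natExtSet_subset_nonnegCone ?_ (fun g hg h0 => le_lowerPrev hD hg fun x => h0 x)
    (fun f g hf hg => lowerPrev_add_le hD hf hg) (fun c hc g _ => lowerPrev_smul hD hc.le g)
  rintro _ ⟨⟨g, _⟩, ⟨hg, rfl⟩, m, hm, rfl⟩
  have hfun : (fun x => (g x - m) * ind Set.univ x) = fun x => g x - m := by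
    ext x
    simp [ind]
  rw [hPD g hg, EReal.coe_lt_coe_iff] at hm
  refine ⟨?_, ?_⟩ <;> simp only [hfun]
  · exact hg.sub_const m
  · rw [lowerPrev_sub_const hD hg]
    linarith

end Cone

section Product

variable {X1 X2 : Type*} {D2 : Set (X2 → ℝ)}

noncomputable def prevSnd (D2 : Set (X2 → ℝ)) (h : X1 × X2 → ℝ) : X1 → ℝ :=
  fun x1 => lowerPrev D2 (fun x2 => h (x1, x2))

lemma prevSnd_neg (hneg : ∀ g : X2 → ℝ, IsGamble g → lowerPrev D2 (-g) = -lowerPrev D2 g)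
    {h : X1 × X2 → ℝ} (hh : IsGamble h) : prevSnd D2 (-h) = -prevSnd D2 h :=
  funext fun x1 => hneg _ (hh.comp (Prod.mk x1))

variable [Nonempty X2]

lemma IsGamble.prevSnd (hD2 : CoherentSDG D2) {h : X1 × X2 → ℝ} (hh : IsGamble h) :
    IsGamble (prevSnd D2 h) := by
  obtain ⟨M, hM⟩ := hh
  exact ⟨M, fun x1 => abs_lowerPrev_le hD2 fun x2 => hM _⟩

lemma prevSnd_add_le (hD2 : CoherentSDG D2) {h k : X1 × X2 → ℝ} (hh : IsGamble h)
    (hk : IsGamble k) : prevSnd D2 h + prevSnd D2 k ≤ prevSnd D2 (h + k) :=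
  fun x1 => lowerPrev_add_le hD2 (hh.comp (Prod.mk x1)) (hk.comp (Prod.mk x1))

lemma prevSnd_smul (hD2 : CoherentSDG D2) {c : ℝ} (hc : 0 ≤ c) (h : X1 × X2 → ℝ) :
    prevSnd D2 (c • h) = c • prevSnd D2 h :=
  funext fun _ => lowerPrev_smul hD2 hc _

lemma prevSnd_sub_const (hD2 : CoherentSDG D2) {h : X1 × X2 → ℝ} (hh : IsGamble h) (m : ℝ) :
    prevSnd D2 (fun p => h p - m) = fun x1 => prevSnd D2 h x1 - m :=
  funext fun x1 => lowerPrev_sub_const hD2 (hh.comp (Prod.mk x1)) m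

variable [Nonempty X1] {D1 : Set (X1 → ℝ)}

lemma indNatExt_subset_nonnegCone (hD1 : CoherentSDG D1) (hD2 : CoherentSDG D2)
    {P1 : (X1 → ℝ) → Set X1 → EReal} {P2 : (X2 → ℝ) → Set X2 → EReal}
    (hP1D : ∀ g, IsGamble g → P1 g Set.univ = lowerPrev D1 g)
    (hP2D : ∀ g, IsGamble g → P2 g Set.univ = lowerPrev D2 g)
    (hneg2 : ∀ g : X2 → ℝ, IsGamble g → lowerPrev D2 (-g) = -lowerPrev D2 g)
    (F1 : Set (Set X1)) (F2 : Set (Set X2)) :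
    indNatExt (ElpSet {p : (X1 → ℝ) × Set X1 | IsGamble p.1 ∧ p.2 = Set.univ} P1)
        (ElpSet {p : (X2 → ℝ) × Set X2 | IsGamble p.1 ∧ p.2 = Set.univ} P2) F1 F2 ⊆
      nonnegCone fun h => lowerPrev D1 (prevSnd D2 h) := by
  refine natExtSet_subset_nonnegCone (Set.union_subset ?_ ?_) ?_ ?_ ?_
  · rintro _ ⟨f2, hf2, B1, -, rfl⟩
    obtain ⟨hf2g, hf2L⟩ := elpSet_subset_nonnegCone hD2 hP2D hf2
    have hg : IsGamble fun p : X1 × X2 => f2 p.2 * ind B1 p.1 :=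
      (hf2g.comp Prod.snd).mul ((isGamble_ind B1).comp Prod.fst)
    refine ⟨hg, le_lowerPrev hD1 (hg.prevSnd hD2) fun x1 => ?_⟩
    have hsec : (fun x2 => f2 x2 * ind B1 x1) = ind B1 x1 • f2 := by
      ext x2
      simp [mul_comm]
    change 0 ≤ lowerPrev D2 (fun x2 => f2 x2 * ind B1 x1)
    rw [hsec, lowerPrev_smul hD2 (ind_nonneg B1 x1)]
    exact mul_nonneg (ind_nonneg B1 x1) hf2L
  · rintro _ ⟨f1, hf1, B2, -, rfl⟩
    obtain ⟨hf1g, hf1L⟩ := elpSet_subset_nonnegCone hD1 hP1D hf1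
    have hsec : prevSnd D2 (fun p => f1 p.1 * ind B2 p.2) = lowerPrev D2 (ind B2) • f1 := by
      ext x1
      change lowerPrev D2 (f1 x1 • ind B2) = _
      rw [lowerPrev_smul_of_selfConj hD2 hneg2 (isGamble_ind B2), Pi.smul_apply, smul_eq_mul, mul_comm]
    have hprob : 0 ≤ lowerPrev D2 (ind B2) := le_lowerPrev hD2 (isGamble_ind B2) (ind_nonneg B2)
    refine ⟨(hf1g.comp Prod.fst).mul ((isGamble_ind B2).comp Prod.snd), ?_⟩
    change 0 ≤ lowerPrev D1 (prevSnd D2 fun p => f1 p.1 * ind B2 p.2)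
    rw [hsec, lowerPrev_smul hD1 hprob]
    exact mul_nonneg hprob hf1L
  · exact fun h hh h0 => le_lowerPrev hD1 (hh.prevSnd hD2) fun x1 =>
      le_lowerPrev hD2 (hh.comp (Prod.mk x1)) fun x2 => h0 (x1, x2)
  · exact fun h k hh hk => (lowerPrev_add_le hD1 (hh.prevSnd hD2) (hk.prevSnd hD2)).trans
      (lowerPrev_mono hD1 ((hh.prevSnd hD2).add (hk.prevSnd hD2)) ((hh.add hk).prevSnd hD2)
        (prevSnd_add_le hD2 hh hk))
  · intro c hc h _
    rw [prevSnd_smul hD2 hc.le, lowerPrev_smul hD1 hc.le]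

end Product

theorem stmt19_general {X1 X2 : Type*} [Nonempty X1] [Nonempty X2]
    (F1 : Set (Set X1)) (F2 : Set (Set X2))
    (P1 : (X1 → ℝ) → Set X1 → EReal) (P2 : (X2 → ℝ) → Set X2 → EReal)
    (hP1 : Coherent {p : (X1 → ℝ) × Set X1 | IsGamble p.1 ∧ p.2 = Set.univ} P1)
    (hP1c : ∀ f : X1 → ℝ, IsGamble f → P1 f Set.univ = -P1 (-f) Set.univ)
    (hP2 : Coherent {p : (X2 → ℝ) × Set X2 | IsGamble p.1 ∧ p.2 = Set.univ} P2)
    (hP2c : ∀ f : X2 → ℝ, IsGamble f → P2 f Set.univ = -P2 (-f) Set.univ)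
    (f : X1 × X2 → ℝ) (hf : IsGamble f) :
    IsGamble (fun x1 => (P2 (fun x2 => f (x1, x2)) Set.univ).toReal) ∧
    lpProd {p : (X1 → ℝ) × Set X1 | IsGamble p.1 ∧ p.2 = Set.univ} P1
        {p : (X2 → ℝ) × Set X2 | IsGamble p.1 ∧ p.2 = Set.univ} P2 F1 F2 f Set.univ ≤
      P1 (fun x1 => (P2 (fun x2 => f (x1, x2)) Set.univ).toReal) Set.univ ∧
    P1 (fun x1 => (P2 (fun x2 => f (x1, x2)) Set.univ).toReal) Set.univ ≤
      -lpProd {p : (X1 → ℝ) × Set X1 | IsGamble p.1 ∧ p.2 = Set.univ} P1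
        {p : (X2 → ℝ) × Set X2 | IsGamble p.1 ∧ p.2 = Set.univ} P2 F1 F2 (-f) Set.univ := by
  obtain ⟨D1, hD1, hP1D, hneg1⟩ := exists_lowerPrev_of_selfConj hP1 hP1c
  obtain ⟨D2, hD2, hP2D, hneg2⟩ := exists_lowerPrev_of_selfConj hP2 hP2c
  have hbound : ∀ g : X1 × X2 → ℝ, IsGamble g →
      lpProd {p : (X1 → ℝ) × Set X1 | IsGamble p.1 ∧ p.2 = Set.univ} P1
        {p : (X2 → ℝ) × Set X2 | IsGamble p.1 ∧ p.2 = Set.univ} P2 F1 F2 g Set.univ ≤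
      lowerPrev D1 (prevSnd D2 g) := fun g hg =>
    lpOf_univ_le_of_subset_nonnegCone (indNatExt_subset_nonnegCone hD1 hD2 hP1D hP2D hneg2 F1 F2)
      fun m => by rw [prevSnd_sub_const hD2 hg, lowerPrev_sub_const hD1 (hg.prevSnd hD2)]
  have hsec : (fun x1 => (P2 (fun x2 => f (x1, x2)) Set.univ).toReal) = prevSnd D2 f :=
    funext fun x1 => by rw [hP2D (fun x2 => f (x1, x2)) (hf.comp (Prod.mk x1)), EReal.toReal_coe]; rfl
  rw [hsec, hP1D _ (hf.prevSnd hD2)]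
  refine ⟨hf.prevSnd hD2, hbound f hf, EReal.le_neg_of_le_neg ?_⟩
  rw [← EReal.coe_neg, ← hneg1 _ (hf.prevSnd hD2), ← prevSnd_neg hneg2 hf]
  exact hbound (-f) hf.neg

/-- Proposition 20: for linear previsions `P1`, `P2`, the iterated
prevision `P1(P2(f))` lies between the independent natural extension and its
conjugate. -/
theorem stmt19 {X1 X2 : Type*} [Nonempty X1] [Nonempty X2]
    (F1 : Set (Set X1)) (F2 : Set (Set X2))
    (hF1 : ∀ A ∈ F1, A.Nonempty) (hF2 : ∀ A ∈ F2, A.Nonempty)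
    (P1 : (X1 → ℝ) → Set X1 → EReal) (P2 : (X2 → ℝ) → Set X2 → EReal)
    (hP1 : Coherent {p : (X1 → ℝ) × Set X1 | IsGamble p.1 ∧ p.2 = Set.univ} P1)
    (hP1c : ∀ f : X1 → ℝ, IsGamble f → P1 f Set.univ = -P1 (-f) Set.univ)
    (hP2 : Coherent {p : (X2 → ℝ) × Set X2 | IsGamble p.1 ∧ p.2 = Set.univ} P2)
    (hP2c : ∀ f : X2 → ℝ, IsGamble f → P2 f Set.univ = -P2 (-f) Set.univ)
    (f : X1 × X2 → ℝ) (hf : IsGamble f) :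
    IsGamble (fun x1 => (P2 (fun x2 => f (x1, x2)) Set.univ).toReal) ∧
    lpProd {p : (X1 → ℝ) × Set X1 | IsGamble p.1 ∧ p.2 = Set.univ} P1
        {p : (X2 → ℝ) × Set X2 | IsGamble p.1 ∧ p.2 = Set.univ} P2 F1 F2 f Set.univ ≤
      P1 (fun x1 => (P2 (fun x2 => f (x1, x2)) Set.univ).toReal) Set.univ ∧
    P1 (fun x1 => (P2 (fun x2 => f (x1, x2)) Set.univ).toReal) Set.univ ≤
      -lpProd {p : (X1 → ℝ) × Set X1 | IsGamble p.1 ∧ p.2 = Set.univ} P1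
        {p : (X2 → ℝ) × Set X2 | IsGamble p.1 ∧ p.2 = Set.univ} P2 F1 F2 (-f) Set.univ :=
  stmt19_general F1 F2 P1 P2 hP1 hP1c hP2 hP2c f hf

end IPaper
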